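/- arXiv:1709.03804 — 2 statements merged into one kernel-verified Lean document; each statement's English description precedes it below -/
import Mathlib

section
/- Let α = φ₁ dx + φ₂ dy + φ₃ dz be a smooth 1-form on a neighborhood U of 0 ∈ ℝ³ such that the vector field v(x, y, z) = (y, x, 0) satisfies α(v) = 0 identically on U, and such that α annihilates both vectors (1, 1, 0) and (1, −1, 0) at the origin (i.e., φ₁(0) = φ₂(0) = 0). Then (α ∧ dα)(0) = 0; in particular, α is not a contact form at the origin. -/
/-- The pointwise evaluation of a 1-form `α = φ₁ dx + φ₂ dy + φ₃ dz` on `ℝ³`. -/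
noncomputable def oneForm (φ₁ φ₂ φ₃ : ℝ × ℝ × ℝ → ℝ)
    (p v : ℝ × ℝ × ℝ) : ℝ :=
  φ₁ p * v.1 + φ₂ p * v.2.1 + φ₃ p * v.2.2

/-- The exterior derivative `dα` of the 1-form `α`, evaluated at `p`. -/
noncomputable def dOneForm (φ₁ φ₂ φ₃ : ℝ × ℝ × ℝ → ℝ)
    (p u v : ℝ × ℝ × ℝ) : ℝ :=
  fderiv ℝ (fun q => oneForm φ₁ φ₂ φ₃ q v) p u -
    fderiv ℝ (fun q => oneForm φ₁ φ₂ φ₃ q u) p v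

/-- The 3-form `α ∧ dα` evaluated at `p` on a triple of vectors. -/
noncomputable def wedgeAlphaDAlpha (φ₁ φ₂ φ₃ : ℝ × ℝ × ℝ → ℝ)
    (p u v w : ℝ × ℝ × ℝ) : ℝ :=
  oneForm φ₁ φ₂ φ₃ p u * dOneForm φ₁ φ₂ φ₃ p v w -
    oneForm φ₁ φ₂ φ₃ p v * dOneForm φ₁ φ₂ φ₃ p u w +
    oneForm φ₁ φ₂ φ₃ p w * dOneForm φ₁ φ₂ φ₃ p u v

/-- Expansion of a continuous linear functional on `ℝ³` along the standard basis. -/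
lemma clm_expand (L : (ℝ × ℝ × ℝ) →L[ℝ] ℝ) (u : ℝ × ℝ × ℝ) :
    L u = u.1 * L (1, 0, 0) + u.2.1 * L (0, 1, 0) + u.2.2 * L (0, 0, 1) := by
  have h : u = u.1 • ((1, 0, 0) : ℝ × ℝ × ℝ) + u.2.1 • (0, 1, 0) + u.2.2 • (0, 0, 1) := by
    simp [Prod.ext_iff]
  conv_lhs => rw [h]
  simp only [map_add, map_smul, smul_eq_mul]

/-- If a smooth 1-form `α = φ₁ dx + φ₂ dy + φ₃ dz` near `0 ∈ ℝ³` annihilates the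
vector field `v(x,y,z) = (y,x,0)` on a neighborhood of `0`, and annihilates the
vectors `(1,1,0)` and `(1,-1,0)` at the origin (equivalently `φ₁(0) = φ₂(0) = 0`),
then `(α ∧ dα)(0) = 0`; in particular `α` is not a contact form at `0`. -/
theorem not_contact_at_origin
    (U : Set (ℝ × ℝ × ℝ)) (hU : U ∈ nhds (0 : ℝ × ℝ × ℝ))
    (φ₁ φ₂ φ₃ : ℝ × ℝ × ℝ → ℝ)
    (hφ₁ : ContDiffOn ℝ (⊤ : ℕ∞) φ₁ U) (hφ₂ : ContDiffOn ℝ (⊤ : ℕ∞) φ₂ U)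
    (hφ₃ : ContDiffOn ℝ (⊤ : ℕ∞) φ₃ U)
    (hv : ∀ p ∈ U, oneForm φ₁ φ₂ φ₃ p (p.2.1, p.1, 0) = 0)
    (h₁ : oneForm φ₁ φ₂ φ₃ 0 (1, 1, 0) = 0)
    (h₂ : oneForm φ₁ φ₂ φ₃ 0 (1, -1, 0) = 0) :
    ∀ u v w : ℝ × ℝ × ℝ, wedgeAlphaDAlpha φ₁ φ₂ φ₃ 0 u v w = 0 := by
  -- differentiability at 0
  have hd₁ : DifferentiableAt ℝ φ₁ 0 := (hφ₁.contDiffAt hU).differentiableAt (by simp)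
  have hd₂ : DifferentiableAt ℝ φ₂ 0 := (hφ₂.contDiffAt hU).differentiableAt (by simp)
  have hd₃ : DifferentiableAt ℝ φ₃ 0 := (hφ₃.contDiffAt hU).differentiableAt (by simp)
  set D₁ := fderiv ℝ φ₁ 0 with hD₁def
  set D₂ := fderiv ℝ φ₂ 0 with hD₂def
  set D₃ := fderiv ℝ φ₃ 0 with hD₃def
  -- values at the origin
  simp only [oneForm] at h₁ h₂
  have hφ₁0 : φ₁ 0 = 0 := by linarith
  have hφ₂0 : φ₂ 0 = 0 := by linarith
  -- the constraint as a scalar identity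
  have hcon : ∀ p ∈ U, φ₁ p * p.2.1 + φ₂ p * p.1 = 0 := by
    intro p hp
    have := hv p hp
    simpa [oneForm] using this
  -- φ₂ vanishes along the x-axis near 0, so D₂ (1,0,0) = 0
  have hmemx : ∀ᶠ t : ℝ in nhds 0, ((t, 0, 0) : ℝ × ℝ × ℝ) ∈ U := by
    have hc : ContinuousAt (fun t : ℝ => ((t, 0, 0) : ℝ × ℝ × ℝ)) 0 := by fun_prop
    have := hc.preimage_mem_nhds (by exact hU)
    exact this
  have hgx : (fun t : ℝ => φ₂ (t, 0, 0)) =ᶠ[nhds 0] fun _ => 0 := by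
    filter_upwards [hmemx] with t ht
    rcases eq_or_ne t 0 with rfl | hne
    · exact hφ₂0
    · have h := hcon _ ht
      simp only at h
      have : φ₂ (t, 0, 0) * t = 0 := by linarith
      exact (mul_eq_zero.1 this).resolve_right hne
  have hix : HasDerivAt (fun t : ℝ => ((t, 0, 0) : ℝ × ℝ × ℝ)) (1, 0, 0) 0 :=
    (hasDerivAt_id 0).prodMk ((hasDerivAt_const 0 (0 : ℝ)).prodMk (hasDerivAt_const 0 (0 : ℝ)))
  have hcompx : HasDerivAt (fun t : ℝ => φ₂ (t, 0, 0)) (D₂ (1, 0, 0)) 0 := by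
    have h0 : HasFDerivAt φ₂ D₂ ((0 : ℝ), (0 : ℝ), (0 : ℝ)) := hd₂.hasFDerivAt
    exact h0.comp_hasDerivAt 0 hix
  have hD21 : D₂ (1, 0, 0) = 0 := by
    have hz : HasDerivAt (fun _ : ℝ => (0 : ℝ)) 0 0 := hasDerivAt_const 0 0
    have := (hcompx.congr_of_eventuallyEq hgx.symm).unique hz
    simpa using this
  -- φ₁ vanishes along the y-axis near 0, so D₁ (0,1,0) = 0
  have hmemy : ∀ᶠ t : ℝ in nhds 0, ((0, t, 0) : ℝ × ℝ × ℝ) ∈ U := by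
    have hc : ContinuousAt (fun t : ℝ => ((0, t, 0) : ℝ × ℝ × ℝ)) 0 := by fun_prop
    have := hc.preimage_mem_nhds (by exact hU)
    exact this
  have hgy : (fun t : ℝ => φ₁ (0, t, 0)) =ᶠ[nhds 0] fun _ => 0 := by
    filter_upwards [hmemy] with t ht
    rcases eq_or_ne t 0 with rfl | hne
    · exact hφ₁0
    · have h := hcon _ ht
      simp only at h
      have : φ₁ (0, t, 0) * t = 0 := by linarith
      exact (mul_eq_zero.1 this).resolve_right hne
  have hiy : HasDerivAt (fun t : ℝ => ((0, t, 0) : ℝ × ℝ × ℝ)) (0, 1, 0) 0 :=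
    (hasDerivAt_const 0 (0 : ℝ)).prodMk ((hasDerivAt_id 0).prodMk (hasDerivAt_const 0 (0 : ℝ)))
  have hcompy : HasDerivAt (fun t : ℝ => φ₁ (0, t, 0)) (D₁ (0, 1, 0)) 0 := by
    have h0 : HasFDerivAt φ₁ D₁ ((0 : ℝ), (0 : ℝ), (0 : ℝ)) := hd₁.hasFDerivAt
    exact h0.comp_hasDerivAt 0 hiy
  have hD12 : D₁ (0, 1, 0) = 0 := by
    have hz : HasDerivAt (fun _ : ℝ => (0 : ℝ)) 0 0 := hasDerivAt_const 0 0
    have := (hcompy.congr_of_eventuallyEq hgy.symm).unique hz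
    simpa using this
  -- compute fderiv of q ↦ α_q(v) at 0
  have key : ∀ v u : ℝ × ℝ × ℝ, fderiv ℝ (fun q => oneForm φ₁ φ₂ φ₃ q v) 0 u =
      D₁ u * v.1 + D₂ u * v.2.1 + D₃ u * v.2.2 := by
    intro v u
    have h : HasFDerivAt (fun q => oneForm φ₁ φ₂ φ₃ q v)
        ((v.1 • D₁ + v.2.1 • D₂) + v.2.2 • D₃) 0 := by
      simpa [oneForm, Pi.add_def] using
        ((hd₁.hasFDerivAt.mul_const v.1).add (hd₂.hasFDerivAt.mul_const v.2.1)).add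
          (hd₃.hasFDerivAt.mul_const v.2.2)
    rw [h.fderiv]
    simp [smul_eq_mul]
    ring
  intro u v w
  simp only [wedgeAlphaDAlpha, dOneForm, key]
  simp only [oneForm, hφ₁0, hφ₂0]
  rw [clm_expand D₁ u, clm_expand D₁ v, clm_expand D₁ w,
      clm_expand D₂ u, clm_expand D₂ v, clm_expand D₂ w,
      clm_expand D₃ u, clm_expand D₃ v, clm_expand D₃ w, hD21, hD12]
  ring
end

section
/- There is no contact form on any open neighborhood U of the origin in ℝ³ all of whose kernel planes contain the tangent directions of the fibers of the indefinite fold map f(x, y, z) = (x² − y², z). Precisely: if α is a smooth 1-form on U with α ∧ dα nowhere zero on U, then it is not the case that every smooth curve contained in a fiber of f has all its tangent vectors in ker α. -/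
noncomputable def sig (t : ℝ) : ℝ := t / (1 + t ^ 2)

lemma sig_zero : sig 0 = 0 := by simp [sig]

lemma sig_abs (t : ℝ) : |sig t| ≤ 1 / 2 := by
  rw [sig, abs_div, abs_of_pos (by positivity : (0:ℝ) < 1 + t ^ 2),
    div_le_iff₀ (by positivity)]
  nlinarith [sq_nonneg (|t| - 1), sq_abs t]

lemma sig_contDiff : ContDiff ℝ (⊤ : ℕ∞) sig := by
  apply ContDiff.div contDiff_id (by fun_prop)
  intro t; positivity

lemma sig_hasDerivAt : HasDerivAt sig 1 0 := by
  have h1 : HasDerivAt (fun t : ℝ => 1 + t ^ 2) 0 0 := by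
    simpa using ((hasDerivAt_pow 2 (0:ℝ)).const_add 1)
  have h2 := (hasDerivAt_id (0:ℝ)).div h1 (by norm_num)
  rw [show sig = id / fun t : ℝ => 1 + t ^ 2 from rfl]
  simpa using h2

lemma exp_half_lt_two : Real.exp (1/2) < 2 := by
  have h : Real.exp (1/2) * Real.exp (1/2) = Real.exp 1 := by
    rw [← Real.exp_add]; norm_num
  nlinarith [Real.exp_one_lt_d9, Real.exp_pos (1/2)]

lemma cosh_lt_two {u : ℝ} (h : |u| ≤ 1/2) : Real.cosh u < 2 := by
  rw [abs_le] at h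
  have h1 : Real.exp u ≤ Real.exp (1/2) := Real.exp_le_exp.2 h.2
  have h2 : Real.exp (-u) ≤ Real.exp (1/2) := Real.exp_le_exp.2 (by linarith)
  have := exp_half_lt_two
  nlinarith [Real.cosh_eq u, Real.cosh_add_sinh u, Real.cosh_sub_sinh u]

lemma abs_sinh_le_cosh (u : ℝ) : |Real.sinh u| ≤ Real.cosh u := by
  rw [abs_le]
  constructor <;>
    nlinarith [Real.cosh_sub_sinh u, Real.cosh_add_sinh u, Real.exp_pos u,
      Real.exp_pos (-u)]

lemma mem_of_abs {U : Set (ℝ × ℝ × ℝ)} {δ : ℝ}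
    (hball : Metric.ball (0 : ℝ × ℝ × ℝ) δ ⊆ U) {a b c : ℝ}
    (ha : |a| < δ) (hb : |b| < δ) (hc : |c| < δ) : ((a, b, c) : ℝ × ℝ × ℝ) ∈ U := by
  apply hball
  rw [Metric.mem_ball]
  have : dist ((a, b, c) : ℝ × ℝ × ℝ) 0 = max |a| (max |b| |c|) := by
    simp [Prod.dist_eq, Real.dist_eq, Prod.norm_def, Real.norm_eq_abs]
  rw [this]
  exact max_lt ha (max_lt hb hc)

/-- There is no contact form on a neighborhood `U` of `0 ∈ ℝ³` making all fibers
of the indefinite fold map `f(x,y,z) = (x² − y², z)` Legendrian: if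
`α = φ₁ dx + φ₂ dy + φ₃ dz` is a smooth 1-form on `U` with `α ∧ dα` nowhere zero
on `U`, then it is not the case that every smooth curve lying in `U` and in a
single fiber of `f` has all its tangent vectors in `ker α`. -/
theorem no_singular_legendre_fibration_local
    (f : ℝ × ℝ × ℝ → ℝ × ℝ)
    (hf : ∀ p : ℝ × ℝ × ℝ, f p = (p.1 ^ 2 - p.2.1 ^ 2, p.2.2))
    (U : Set (ℝ × ℝ × ℝ)) (hUopen : IsOpen U) (hU0 : (0 : ℝ × ℝ × ℝ) ∈ U)
    (φ₁ φ₂ φ₃ : ℝ × ℝ × ℝ → ℝ)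
    (hφ₁ : ContDiffOn ℝ (⊤ : ℕ∞) φ₁ U) (hφ₂ : ContDiffOn ℝ (⊤ : ℕ∞) φ₂ U)
    (hφ₃ : ContDiffOn ℝ (⊤ : ℕ∞) φ₃ U)
    (hcontact : ∀ p ∈ U,
      wedgeAlphaDAlpha φ₁ φ₂ φ₃ p (1, 0, 0) (0, 1, 0) (0, 0, 1) ≠ 0) :
    ¬ (∀ γ : ℝ → ℝ × ℝ × ℝ, ContDiff ℝ (⊤ : ℕ∞) γ → (∀ t, γ t ∈ U) →
        (∀ s t, f (γ s) = f (γ t)) →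
        ∀ t, oneForm φ₁ φ₂ φ₃ (γ t) (deriv γ t) = 0) := by
  intro H
  obtain ⟨δ, hδ, hball⟩ := Metric.isOpen_iff.mp hUopen 0 hU0
  set r : ℝ := δ / 4 with hr
  have hrpos : 0 < r := by positivity
  -- line curves through 0 with sign ε = ±1
  have hline : ∀ ε : ℝ, ε = 1 ∨ ε = -1 →
      φ₁ 0 * r + φ₂ 0 * (ε * r) = 0 := by
    intro ε hε
    set γ : ℝ → ℝ × ℝ × ℝ := fun t => (r * sig t, ε * (r * sig t), 0) with hγ
    have habsε : |ε| = 1 := by rcases hε with h | h <;> simp [h]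
    have hmem : ∀ t, γ t ∈ U := by
      intro t
      have h1 : |r * sig t| < δ := by
        rw [abs_mul, abs_of_pos hrpos]
        have := sig_abs t
        nlinarith
      apply mem_of_abs hball h1 _ (by simpa using hδ)
      rw [abs_mul, habsε, one_mul]; exact h1
    have hsm : ContDiff ℝ (⊤ : ℕ∞) γ := by
      apply ContDiff.prodMk (contDiff_const.mul sig_contDiff)
      exact ContDiff.prodMk (contDiff_const.mul (contDiff_const.mul sig_contDiff))
        contDiff_const
    have hfib : ∀ s t, f (γ s) = f (γ t) := by
      intro s t
      rw [hf, hf]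
      have : ∀ u : ℝ, (r * sig u) ^ 2 - (ε * (r * sig u)) ^ 2 = 0 := by
        intro u
        rcases hε with h | h <;> rw [h] <;> ring
      simp [hγ, this]
    have hder : HasDerivAt γ (r, ε * r, 0) 0 := by
      have h1 : HasDerivAt (fun t => r * sig t) (r * 1) 0 :=
        sig_hasDerivAt.const_mul r
      have h2 : HasDerivAt (fun t => ε * (r * sig t)) (ε * (r * 1)) 0 :=
        (sig_hasDerivAt.const_mul r).const_mul ε
      have h3 : HasDerivAt (fun _ : ℝ => (0:ℝ)) 0 0 := hasDerivAt_const _ _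
      simpa using h1.prodMk (h2.prodMk h3)
    have := H γ hsm hmem hfib 0
    rw [hder.deriv] at this
    have hγ0 : γ 0 = 0 := by simp [hγ, sig_zero]
    rw [hγ0] at this
    simpa [oneForm] using this
  have hφ1z : φ₁ 0 = 0 := by
    have h1 := hline 1 (Or.inl rfl)
    have h2 := hline (-1) (Or.inr rfl)
    have : φ₁ 0 * r = 0 := by linarith
    exact by
      rcases mul_eq_zero.mp this with h | h
      · exact h
      · exact absurd h (ne_of_gt hrpos)
  have hφ2z : φ₂ 0 = 0 := by
    have h1 := hline 1 (Or.inl rfl)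
    have h2 := hline (-1) (Or.inr rfl)
    have : φ₂ 0 * r = 0 := by nlinarith
    rcases mul_eq_zero.mp this with h | h
    · exact h
    · exact absurd h (ne_of_gt hrpos)
  -- hyperbola curves: φ₂ vanishes on the x-axis near 0
  have hC : ∀ x : ℝ, |x| < r → φ₂ (x, 0, 0) = 0 := by
    intro x hx
    rcases eq_or_ne x 0 with rfl | hx0
    · exact hφ2z
    set γ : ℝ → ℝ × ℝ × ℝ :=
      fun t => (x * Real.cosh (sig t), x * Real.sinh (sig t), 0) with hγ
    have hmem : ∀ t, γ t ∈ U := by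
      intro t
      have hc2 : Real.cosh (sig t) < 2 := cosh_lt_two (sig_abs t)
      have hs2 : |Real.sinh (sig t)| < 2 :=
        lt_of_le_of_lt (abs_sinh_le_cosh _) hc2
      have hcpos := Real.cosh_pos (sig t)
      have h1 : |x * Real.cosh (sig t)| < δ := by
        rw [abs_mul, abs_of_pos hcpos]
        nlinarith [abs_nonneg x]
      have h2 : |x * Real.sinh (sig t)| < δ := by
        rw [abs_mul]
        nlinarith [abs_nonneg x, abs_nonneg (Real.sinh (sig t))]
      exact mem_of_abs hball h1 h2 (by simpa using hδ)
    have hsm : ContDiff ℝ (⊤ : ℕ∞) γ := by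
      apply ContDiff.prodMk (contDiff_const.mul (Real.contDiff_cosh.comp sig_contDiff))
      exact ContDiff.prodMk
        (contDiff_const.mul (Real.contDiff_sinh.comp sig_contDiff)) contDiff_const
    have hfib : ∀ s t, f (γ s) = f (γ t) := by
      intro s t
      rw [hf, hf]
      have key : ∀ u : ℝ,
          (x * Real.cosh u) ^ 2 - (x * Real.sinh u) ^ 2 = x ^ 2 := by
        intro u; nlinarith [Real.cosh_sq_sub_sinh_sq u]
      simp [hγ, key]
    have hder : HasDerivAt γ (0, x, 0) 0 := by
      have h1 : HasDerivAt (fun t => Real.cosh (sig t))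
          (Real.sinh (sig 0) * 1) 0 :=
        (Real.hasDerivAt_cosh (sig 0)).comp 0 sig_hasDerivAt
      have h2 : HasDerivAt (fun t => Real.sinh (sig t))
          (Real.cosh (sig 0) * 1) 0 :=
        (Real.hasDerivAt_sinh (sig 0)).comp 0 sig_hasDerivAt
      have h3 : HasDerivAt (fun _ : ℝ => (0:ℝ)) 0 0 := hasDerivAt_const _ _
      have := (h1.const_mul x).prodMk ((h2.const_mul x).prodMk h3)
      simpa [sig_zero] using this
    have := H γ hsm hmem hfib 0
    rw [hder.deriv] at this
    have hγ0 : γ 0 = (x, 0, 0) := by simp [hγ, sig_zero]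
    rw [hγ0] at this
    simp only [oneForm] at this
    have : x * φ₂ (x, 0, 0) = 0 := by linarith [this]
    rcases mul_eq_zero.mp this with h | h
    · exact absurd h hx0
    · exact h
  -- hyperbola curves: φ₁ vanishes on the y-axis near 0
  have hD : ∀ y : ℝ, |y| < r → φ₁ (0, y, 0) = 0 := by
    intro y hy
    rcases eq_or_ne y 0 with rfl | hy0
    · exact hφ1z
    set γ : ℝ → ℝ × ℝ × ℝ :=
      fun t => (y * Real.sinh (sig t), y * Real.cosh (sig t), 0) with hγ
    have hmem : ∀ t, γ t ∈ U := by
      intro t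
      have hc2 : Real.cosh (sig t) < 2 := cosh_lt_two (sig_abs t)
      have hs2 : |Real.sinh (sig t)| < 2 :=
        lt_of_le_of_lt (abs_sinh_le_cosh _) hc2
      have hcpos := Real.cosh_pos (sig t)
      have h2 : |y * Real.cosh (sig t)| < δ := by
        rw [abs_mul, abs_of_pos hcpos]
        nlinarith [abs_nonneg y]
      have h1 : |y * Real.sinh (sig t)| < δ := by
        rw [abs_mul]
        nlinarith [abs_nonneg y, abs_nonneg (Real.sinh (sig t))]
      exact mem_of_abs hball h1 h2 (by simpa using hδ)
    have hsm : ContDiff ℝ (⊤ : ℕ∞) γ := by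
      apply ContDiff.prodMk (contDiff_const.mul (Real.contDiff_sinh.comp sig_contDiff))
      exact ContDiff.prodMk
        (contDiff_const.mul (Real.contDiff_cosh.comp sig_contDiff)) contDiff_const
    have hfib : ∀ s t, f (γ s) = f (γ t) := by
      intro s t
      rw [hf, hf]
      have key : ∀ u : ℝ,
          (y * Real.sinh u) ^ 2 - (y * Real.cosh u) ^ 2 = -(y ^ 2) := by
        intro u; nlinarith [Real.cosh_sq_sub_sinh_sq u]
      simp [hγ, key]
    have hder : HasDerivAt γ (y, 0, 0) 0 := by
      have h1 : HasDerivAt (fun t => Real.sinh (sig t))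
          (Real.cosh (sig 0) * 1) 0 :=
        (Real.hasDerivAt_sinh (sig 0)).comp 0 sig_hasDerivAt
      have h2 : HasDerivAt (fun t => Real.cosh (sig t))
          (Real.sinh (sig 0) * 1) 0 :=
        (Real.hasDerivAt_cosh (sig 0)).comp 0 sig_hasDerivAt
      have h3 : HasDerivAt (fun _ : ℝ => (0:ℝ)) 0 0 := hasDerivAt_const _ _
      have := (h1.const_mul y).prodMk ((h2.const_mul y).prodMk h3)
      simpa [sig_zero] using this
    have := H γ hsm hmem hfib 0
    rw [hder.deriv] at this
    have hγ0 : γ 0 = (0, y, 0) := by simp [hγ, sig_zero]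
    rw [hγ0] at this
    simp only [oneForm] at this
    have : y * φ₁ (0, y, 0) = 0 := by linarith [this]
    rcases mul_eq_zero.mp this with h | h
    · exact absurd h hy0
    · exact h
  -- derivative facts
  have hU_nhds : U ∈ nhds (0 : ℝ × ℝ × ℝ) := hUopen.mem_nhds hU0
  have hd2 : fderiv ℝ φ₂ 0 (1, 0, 0) = 0 := by
    have hdiff : DifferentiableAt ℝ φ₂ 0 :=
      ((hφ₂.contDiffAt hU_nhds).differentiableAt (by simp))
    have hc : HasDerivAt (fun x : ℝ => ((x, 0, 0) : ℝ × ℝ × ℝ))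
        ((1 : ℝ), ((0 : ℝ), (0 : ℝ))) 0 :=
      (hasDerivAt_id 0).prodMk (hasDerivAt_const _ _)
    have h1 : HasDerivAt (fun x : ℝ => φ₂ (x, 0, 0))
        (fderiv ℝ φ₂ 0 (1, 0, 0)) 0 :=
      hdiff.hasFDerivAt.comp_hasDerivAt 0 hc
    have heq : (fun x : ℝ => φ₂ (x, 0, 0)) =ᶠ[nhds (0:ℝ)] fun _ => 0 := by
      filter_upwards [Metric.ball_mem_nhds (0:ℝ) hrpos] with x hx
      exact hC x (by simpa [Real.dist_eq] using hx)
    have h2 := h1.congr_of_eventuallyEq heq.symm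
    exact (h2.unique (hasDerivAt_const _ _))
  have hd1 : fderiv ℝ φ₁ 0 (0, 1, 0) = 0 := by
    have hdiff : DifferentiableAt ℝ φ₁ 0 :=
      ((hφ₁.contDiffAt hU_nhds).differentiableAt (by simp))
    have hc : HasDerivAt (fun y : ℝ => ((0, y, 0) : ℝ × ℝ × ℝ))
        ((0 : ℝ), ((1 : ℝ), (0 : ℝ))) 0 :=
      (hasDerivAt_const _ _).prodMk ((hasDerivAt_id 0).prodMk (hasDerivAt_const _ _))
    have h1 : HasDerivAt (fun y : ℝ => φ₁ (0, y, 0))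
        (fderiv ℝ φ₁ 0 (0, 1, 0)) 0 :=
      hdiff.hasFDerivAt.comp_hasDerivAt 0 hc
    have heq : (fun y : ℝ => φ₁ (0, y, 0)) =ᶠ[nhds (0:ℝ)] fun _ => 0 := by
      filter_upwards [Metric.ball_mem_nhds (0:ℝ) hrpos] with y hy
      exact hD y (by simpa [Real.dist_eq] using hy)
    have h2 := h1.congr_of_eventuallyEq heq.symm
    exact (h2.unique (hasDerivAt_const _ _))
  -- contradiction
  apply hcontact 0 hU0
  have e1fun : (fun q => oneForm φ₁ φ₂ φ₃ q (1, 0, 0)) = φ₁ := by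
    funext q; simp [oneForm]
  have e2fun : (fun q => oneForm φ₁ φ₂ φ₃ q (0, 1, 0)) = φ₂ := by
    funext q; simp [oneForm]
  have hd2' : (fderiv ℝ φ₂ 0) ((1 : ℝ), (0 : ℝ × ℝ)) = 0 := hd2
  have hd1' : (fderiv ℝ φ₁ 0) ((0 : ℝ), (1 : ℝ), (0 : ℝ)) = 0 := hd1
  simp only [wedgeAlphaDAlpha, dOneForm, e1fun, e2fun]
  simp [oneForm, hφ1z, hφ2z, hd1, hd2, hd1', hd2']
end
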